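/- Let f : ℝⁿ → ℝ be three times continuously differentiable with L-Lipschitz third derivative. If ∇f(x) = 0, ∇²f(x) is positive semidefinite, and there exists a unit vector u with uᵀ∇²f(x)u = 0 but ∇³f(x)(u,u,u) = c > 0, then for every 0 < ε < 2c/L we have f(x - εu) ≤ f(x) - cε³/12; in particular x is not a third order local minimum. -/

import Mathlib

/-!
Along the ray `t ↦ x - t • u` the function `g t = f (x - t • u)` has `g' 0 = g'' 0 = 0` and
`g''' 0 = -c`, and `g'''` is `L`-Lipschitz because the Frobenius norm dominates the operator norm.
Integrating `g''' t ≤ -c + L t` three times gives `g t ≤ f x - c t³/6 + L t⁴/24`, which is at most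
`f x - c t³/12` once `t < 2c/L` and falls below any `f x - C t⁴` for small `t > 0`.
-/

noncomputable def frob3 {n : ℕ}
    (T : ContinuousMultilinearMap ℝ (fun _ : Fin 3 => EuclideanSpace ℝ (Fin n)) ℝ) : ℝ :=
  Real.sqrt (∑ i : Fin n, ∑ j : Fin n, ∑ k : Fin n,
    (T ![EuclideanSpace.single i 1, EuclideanSpace.single j 1, EuclideanSpace.single k 1]) ^ 2)

open Finset

theorem Fintype.sum_fin_three_pi {β M : Type*} [Fintype β] [AddCommMonoid M]
    (g : (Fin 3 → β) → M) : ∑ r, g r = ∑ i, ∑ j, ∑ k, g ![i, j, k] := by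
  simp only [← (Fin.consEquiv _).sum_comp, Fintype.sum_prod_type, Fintype.sum_unique]
  rfl

theorem ContinuousMultilinearMap.apply_eq_sum_single {ι : Type*} [Fintype ι] [DecidableEq ι]
    {n : ℕ} (T : ContinuousMultilinearMap ℝ (fun _ : ι => EuclideanSpace ℝ (Fin n)) ℝ)
    (m : ι → EuclideanSpace ℝ (Fin n)) :
    T m = ∑ r : ι → Fin n, (∏ l, m l (r l)) * T (fun l => EuclideanSpace.single (r l) 1) := by
  conv_lhs => rw [← funext fun l => (EuclideanSpace.basisFun (Fin n) ℝ).sum_repr (m l)]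
  simp [T.map_sum, T.map_smul_univ]

theorem EuclideanSpace.sum_prod_sq_eq_prod_norm_sq {ι : Type*} [Fintype ι] [DecidableEq ι]
    {n : ℕ} (m : ι → EuclideanSpace ℝ (Fin n)) :
    ∑ r : ι → Fin n, (∏ l, m l (r l)) ^ 2 = (∏ l, ‖m l‖) ^ 2 := by
  simp only [← prod_pow, EuclideanSpace.norm_sq_eq, Real.norm_eq_abs, sq_abs]
  rw [prod_univ_sum, Fintype.piFinset_univ]

section frob3

variable {n : ℕ} (T : ContinuousMultilinearMap ℝ (fun _ : Fin 3 => EuclideanSpace ℝ (Fin n)) ℝ)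

theorem frob3_eq_sqrt_sum_pi :
    frob3 T = √(∑ r : Fin 3 → Fin n, T (fun l => EuclideanSpace.single (r l) 1) ^ 2) := by
  rw [frob3, Fintype.sum_fin_three_pi]
  congr! with i _ j _ k _ l
  fin_cases l <;> rfl

theorem norm_le_frob3 : ‖T‖ ≤ frob3 T := by
  refine T.opNorm_le_bound (Real.sqrt_nonneg _) fun m => ?_
  -- Cauchy–Schwarz applied to the expansion of `T m` in the standard basis
  rw [Real.norm_eq_abs, T.apply_eq_sum_single, frob3_eq_sqrt_sum_pi, mul_comm,
    ← Real.sqrt_sq (prod_nonneg fun l _ => norm_nonneg (m l)), ← Real.sqrt_mul (sq_nonneg _),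
    ← EuclideanSpace.sum_prod_sq_eq_prod_norm_sq]
  exact Real.abs_le_sqrt (sum_mul_sq_le_sq_mul_sq _ _ _)

end frob3

theorem le_of_hasDerivAt_le_of_nonneg {g p g' p' : ℝ → ℝ} (hg : ∀ t, HasDerivAt g (g' t) t)
    (hp : ∀ t, HasDerivAt p (p' t) t) (h₀ : g 0 ≤ p 0) (hle : ∀ t, 0 ≤ t → g' t ≤ p' t)
    {t : ℝ} (ht : 0 ≤ t) : g t ≤ p t :=
  image_le_of_deriv_right_le_deriv_boundary
    (continuous_iff_continuousAt.2 fun s => (hg s).continuousAt).continuousOn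
    (fun s _ => (hg s).hasDerivWithinAt) h₀
    (continuous_iff_continuousAt.2 fun s => (hp s).continuousAt).continuousOn
    (fun s _ => (hp s).hasDerivWithinAt) (fun s hs => hle s hs.1) ⟨ht, le_rfl⟩

theorem le_quartic_of_third_deriv_le {g g₁ g₂ g₃ : ℝ → ℝ} {a b : ℝ}
    (hg : ∀ t, HasDerivAt g (g₁ t) t) (hg₁ : ∀ t, HasDerivAt g₁ (g₂ t) t)
    (hg₂ : ∀ t, HasDerivAt g₂ (g₃ t) t) (hg₁0 : g₁ 0 = 0) (hg₂0 : g₂ 0 = 0)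
    (hg₃ : ∀ t, 0 ≤ t → g₃ t ≤ a + b * t) {t : ℝ} (ht : 0 ≤ t) :
    g t ≤ g 0 + a * t ^ 3 / 6 + b * t ^ 4 / 24 := by
  have hp₂ : ∀ s : ℝ, HasDerivAt (fun s => a * s + b * s ^ 2 / 2) (a + b * s) s := fun s =>
    (((hasDerivAt_id s).const_mul a).add
      (((hasDerivAt_pow 2 s).const_mul b).div_const 2)).congr_deriv (by norm_num; ring)
  have hp₁ : ∀ s : ℝ, HasDerivAt (fun s => a * s ^ 2 / 2 + b * s ^ 3 / 6)
      (a * s + b * s ^ 2 / 2) s := fun s =>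
    ((((hasDerivAt_pow 2 s).const_mul a).div_const 2).add
      (((hasDerivAt_pow 3 s).const_mul b).div_const 6)).congr_deriv (by norm_num; ring)
  have hp₀ : ∀ s : ℝ, HasDerivAt (fun s => g 0 + a * s ^ 3 / 6 + b * s ^ 4 / 24)
      (a * s ^ 2 / 2 + b * s ^ 3 / 6) s := fun s =>
    (((((hasDerivAt_pow 3 s).const_mul a).div_const 6).const_add (g 0)).add
      (((hasDerivAt_pow 4 s).const_mul b).div_const 24)).congr_deriv (by norm_num; ring)
  have h₂ : ∀ s, 0 ≤ s → g₂ s ≤ a * s + b * s ^ 2 / 2 := fun s =>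
    le_of_hasDerivAt_le_of_nonneg hg₂ hp₂ (by simp [hg₂0]) hg₃
  have h₁ : ∀ s, 0 ≤ s → g₁ s ≤ a * s ^ 2 / 2 + b * s ^ 3 / 6 := fun s =>
    le_of_hasDerivAt_le_of_nonneg hg₁ hp₁ (by simp [hg₁0]) h₂
  exact le_of_hasDerivAt_le_of_nonneg hg hp₀ (by simp) h₁ ht

theorem hasDerivAt_iteratedFDeriv_line {E F : Type*} [NormedAddCommGroup E] [NormedSpace ℝ E]
    [NormedAddCommGroup F] [NormedSpace ℝ F] {f : E → F} {N : WithTop ℕ∞} (hf : ContDiff ℝ N f)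
    {k : ℕ} (hk : k < N) (x v : E) (t : ℝ) :
    HasDerivAt (fun s : ℝ => iteratedFDeriv ℝ k f (x + s • v) (fun _ => v))
      (iteratedFDeriv ℝ (k + 1) f (x + t • v) (fun _ => v)) t := by
  have hline : HasDerivAt (fun s : ℝ => x + s • v) v t := by
    simpa using ((hasDerivAt_id t).smul_const v).const_add x
  have hD := ((hf.differentiable_iteratedFDeriv hk (x + t • v)).hasFDerivAt).comp_hasDerivAt t hline
  exact (ContinuousMultilinearMap.apply ℝ (fun _ : Fin k => E) F (fun _ => v)).hasFDerivAt
    |>.comp_hasDerivAt t hD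

theorem abs_sub_iteratedFDeriv_three_le {n : ℕ} {f : EuclideanSpace ℝ (Fin n) → ℝ} {L : ℝ}
    (hLip : ∀ x y, frob3 (iteratedFDeriv ℝ 3 f x - iteratedFDeriv ℝ 3 f y) ≤ L * ‖x - y‖)
    (x y v : EuclideanSpace ℝ (Fin n)) (hv : ‖v‖ = 1) :
    |iteratedFDeriv ℝ 3 f y (fun _ => v) - iteratedFDeriv ℝ 3 f x (fun _ => v)| ≤ L * ‖y - x‖ :=
  calc |(iteratedFDeriv ℝ 3 f y - iteratedFDeriv ℝ 3 f x) (fun _ => v)|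
      ≤ ‖iteratedFDeriv ℝ 3 f y - iteratedFDeriv ℝ 3 f x‖ * ∏ _ : Fin 3, ‖v‖ :=
        by rw [← Real.norm_eq_abs]; exact ContinuousMultilinearMap.le_opNorm _ _
    _ ≤ frob3 (iteratedFDeriv ℝ 3 f y - iteratedFDeriv ℝ 3 f x) := by
        simpa [hv] using norm_le_frob3 _
    _ ≤ L * ‖y - x‖ := hLip y x

theorem apply_sub_smul_le_sub_cube_add_quartic {n : ℕ} {f : EuclideanSpace ℝ (Fin n) → ℝ}
    {L : ℝ} (hf : ContDiff ℝ 3 f)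
    (hLip : ∀ x y, frob3 (iteratedFDeriv ℝ 3 f x - iteratedFDeriv ℝ 3 f y) ≤ L * ‖x - y‖)
    {x u : EuclideanSpace ℝ (Fin n)} {c : ℝ} (hgrad : gradient f x = 0) (hu : ‖u‖ = 1)
    (hker : iteratedFDeriv ℝ 2 f x ![u, u] = 0) (hc : iteratedFDeriv ℝ 3 f x ![u, u, u] = c)
    {t : ℝ} (ht : 0 ≤ t) :
    f (x - t • u) ≤ f x - c * t ^ 3 / 6 + L * t ^ 4 / 24 := by
  set D : ℕ → ℝ → ℝ := fun k s => iteratedFDeriv ℝ k f (x + s • -u) (fun _ => -u) with hD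
  have hderiv : ∀ k < 3, ∀ s, HasDerivAt (D k) (D (k + 1) s) s := fun k hk =>
    hasDerivAt_iteratedFDeriv_line hf (by exact_mod_cast hk) x (-u)
  have hneg : ∀ k, D k 0 = (-1) ^ k * iteratedFDeriv ℝ k f x (fun _ => u) := fun k => by
    simpa [hD] using (iteratedFDeriv ℝ k f x).map_smul_univ (fun _ => (-1 : ℝ)) (fun _ => u)
  simp only [Matrix.vec_single_eq_const, Matrix.vecCons_const] at hker hc
  have hD₁ : D 1 0 = 0 := by
    rw [hneg, iteratedFDeriv_one_apply, ← toDual_gradient, hgrad]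
    simp
  have hD₂ : D 2 0 = 0 := by rw [hneg, hker, mul_zero]
  have hD₃ : ∀ s, 0 ≤ s → D 3 s ≤ -c + L * s := fun s hs => by
    have hdist : ‖x + s • -u - x‖ = s := by simp [norm_smul, hu, abs_of_nonneg hs]
    have h := abs_sub_iteratedFDeriv_three_le hLip x (x + s • -u) (-u) (by rwa [norm_neg])
    rw [hdist] at h
    have hLip₃ : |D 3 s - D 3 0| ≤ L * s := by simpa only [hD, zero_smul, add_zero] using h
    have h₀ : D 3 0 = -c := by rw [hneg, hc]; ring
    linarith [le_abs_self (D 3 s - D 3 0)]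
  have h := le_quartic_of_third_deriv_le (g := D 0) (hderiv 0 (by norm_num))
    (hderiv 1 (by norm_num)) (hderiv 2 (by norm_num)) hD₁ hD₂ hD₃ ht
  have hDt : D 0 t = f (x - t • u) := by simp [hD, sub_eq_add_neg]
  have hD0 : D 0 0 = f x := by simp [hD]
  rw [hDt, hD0] at h
  linarith

theorem exists_mul_pow_four_lt_mul_pow_three {a δ : ℝ} (b : ℝ) (ha : 0 < a) (hδ : 0 < δ) :
    ∃ t, 0 < t ∧ t ≤ δ ∧ b * t ^ 4 < a * t ^ 3 := by
  set t := min δ (a / (|b| + 1))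
  have ht : 0 < t := lt_min hδ (by positivity)
  have hbt : |b| * t < a := by
    calc |b| * t ≤ |b| * (a / (|b| + 1)) := by gcongr; exact min_le_right _ _
      _ < a := by rw [mul_div_assoc', div_lt_iff₀ (by positivity)]; nlinarith
  refine ⟨t, ht, min_le_left _ _, ?_⟩
  calc b * t ^ 4 = b * t * t ^ 3 := by ring
    _ ≤ |b| * t * t ^ 3 := by gcongr; exact le_abs_self b
    _ < a * t ^ 3 := mul_lt_mul_of_pos_right hbt (pow_pos ht 3)

theorem third_order_direction_escapes_general {n : ℕ} (f : EuclideanSpace ℝ (Fin n) → ℝ)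
    (L : ℝ) (hf : ContDiff ℝ 3 f)
    (hLip : ∀ x y, frob3 (iteratedFDeriv ℝ 3 f x - iteratedFDeriv ℝ 3 f y) ≤ L * ‖x - y‖)
    (x u : EuclideanSpace ℝ (Fin n)) (c : ℝ)
    (hgrad : gradient f x = 0)
    (hu : ‖u‖ = 1)
    (hker : iteratedFDeriv ℝ 2 f x ![u, u] = 0)
    (hc : iteratedFDeriv ℝ 3 f x ![u, u, u] = c)
    (hcpos : 0 < c) :
    (∀ ε : ℝ, 0 < ε → ε < 2 * c / L → f (x - ε • u) ≤ f x - c * ε ^ 3 / 12) ∧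
    ¬ (∃ C > 0, ∃ ε > 0, ∀ y, ‖y - x‖ ≤ ε → f y ≥ f x - C * ‖y - x‖ ^ 4) := by
  have descent := fun t (ht : 0 ≤ t) =>
    apply_sub_smul_le_sub_cube_add_quartic hf hLip hgrad hu hker hc ht
  constructor
  · intro ε hε hεL
    have hL : 0 < L := (div_pos_iff_of_pos_left (by positivity)).1 (hε.trans hεL)
    have hεL' : L * ε < 2 * c := by rwa [lt_div_iff₀ hL, mul_comm] at hεL
    nlinarith [descent ε hε.le, pow_pos hε 3]
  · rintro ⟨C, -, δ, hδ, hmin⟩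
    obtain ⟨t, ht, htδ, hlt⟩ :=
      exists_mul_pow_four_lt_mul_pow_three (C + L / 24) (by positivity : 0 < c / 6) hδ
    have hdist : ‖x - t • u - x‖ = t := by simp [norm_smul, hu, abs_of_pos ht]
    have hlower := hmin (x - t • u) (hdist.trans_le htδ)
    rw [hdist] at hlower
    linarith [descent t ht.le]

theorem third_order_direction_escapes {n : ℕ} (f : EuclideanSpace ℝ (Fin n) → ℝ)
    (L : ℝ) (hf : ContDiff ℝ 3 f)
    (hLip : ∀ x y, frob3 (iteratedFDeriv ℝ 3 f x - iteratedFDeriv ℝ 3 f y) ≤ L * ‖x - y‖)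
    (x u : EuclideanSpace ℝ (Fin n)) (c : ℝ)
    (hgrad : gradient f x = 0)
    (hpsd : ∀ v, 0 ≤ iteratedFDeriv ℝ 2 f x ![v, v])
    (hu : ‖u‖ = 1)
    (hker : iteratedFDeriv ℝ 2 f x ![u, u] = 0)
    (hc : iteratedFDeriv ℝ 3 f x ![u, u, u] = c)
    (hcpos : 0 < c) :
    (∀ ε : ℝ, 0 < ε → ε < 2 * c / L → f (x - ε • u) ≤ f x - c * ε ^ 3 / 12) ∧
    ¬ (∃ C > 0, ∃ ε > 0, ∀ y, ‖y - x‖ ≤ ε → f y ≥ f x - C * ‖y - x‖ ^ 4) :=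
  third_order_direction_escapes_general f L hf hLip x u c hgrad hu hker hc hcpos
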